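/- For every integer n ≥ 0 there exists a family of Laurent polynomials c^{(n)}_{r,j} ∈ ℤ[q,q⁻¹] for 0 ≤ j ≤ r ≤ n, all with non-negative integer coefficients, such that c^{(n)}_{0,0} = 1, the bar-symmetry c^{(n)}_{r,j}(q⁻¹) = c^{(n)}_{r,r−j}(q) holds, and for every associative unital ℚ(q)-algebra A containing elements E, F, K₊, K₋ satisfying the U_q(s̃l₂) relations one has, with C⁽ᵐ⁾ the Chebyshev-type central elements: F^n E^n = Σ_{r=0}^{n} ( Σ_{j=0}^{r} c^{(n)}_{r,j} · K₋^{j} K₊^{r−j} ) · C⁽ⁿ⁻ʳ⁾ and E^n F^n = Σ_{r=0}^{n} ( Σ_{j=0}^{r} c^{(n)}_{r,j} · K₋^{r−j} K₊^{j} ) · C⁽ⁿ⁻ʳ⁾. -/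
import Mathlib


noncomputable section

/-- The Chebyshev-type elements `C⁽⁰⁾ = 1`, `C⁽¹⁾ = C`,
`C⁽ᵐ⁺¹⁾ = C·C⁽ᵐ⁾ - K₊K₋·C⁽ᵐ⁻¹⁾` (for `m ≥ 1`), where `KK = K₊K₋`. -/
def cheb {A : Type*} [Ring A] (C KK : A) : ℕ → A
  | 0 => 1
  | 1 => C
  | n + 2 => C * cheb C KK (n + 1) - KK * cheb C KK n

/-- The value at `x ∈ ℚ(q)` of the Laurent polynomial `x^{-t}·p(x)`, where `p` has
non-negative integer coefficients.  Every Laurent polynomial in `ℤ[q,q⁻¹]` with non-negative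
integer coefficients is of this form. -/
def lvalAt (p : Polynomial ℕ) (t : ℕ) (x : RatFunc ℚ) : RatFunc ℚ :=
  x ^ (-(t : ℤ)) * Polynomial.eval₂ (Nat.castRingHom (RatFunc ℚ)) x p

universe uu

/-- the polynomials `q^{n²}·c^{(n)}_{r,j}` -/
def Pc : ℕ → ℤ → ℤ → Polynomial ℕ
  | 0, r, j => if r = 0 ∧ j = 0 then 1 else 0
  | (n+1), r, j =>
      Polynomial.X ^ ((2*n+1 : ℤ) + 2*r - 4*j).toNat *
          (Pc n r j + if r ≤ (n:ℤ) + 1 then Pc n (r-2) (j-1) else 0)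
      + Polynomial.X ^ ((2*n : ℤ) + 2*r - 4*j).toNat * Pc n (r-1) j
      + Polynomial.X ^ ((2*n+2 : ℤ) + 2*r - 4*j).toNat * Pc n (r-1) (j-1)

lemma Pc_eq_zero : ∀ (n : ℕ) (r j : ℤ), ¬(0 ≤ j ∧ j ≤ r ∧ r ≤ n) → Pc n r j = 0
  | 0, r, j, h => by
    simp only [Pc, ite_eq_right_iff, one_ne_zero]
    rintro ⟨rfl, rfl⟩; exact absurd ⟨le_refl 0, le_refl 0, by exact_mod_cast Nat.zero_le 0⟩ h
  | (n+1), r, j, h => by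
    have h1 : Pc n r j = 0 := Pc_eq_zero n r j (by push_cast at h ⊢; omega)
    have h2 : (if r ≤ (n:ℤ) + 1 then Pc n (r-2) (j-1) else 0) = 0 := by
      split_ifs with hg
      · exact Pc_eq_zero n _ _ (by push_cast at h ⊢; omega)
      · rfl
    have h3 : Pc n (r-1) j = 0 := Pc_eq_zero n _ _ (by push_cast at h ⊢; omega)
    have h4 : Pc n (r-1) (j-1) = 0 := Pc_eq_zero n _ _ (by push_cast at h ⊢; omega)
    simp [Pc, h1, h2, h3, h4]

lemma Pc_ne_zero {n : ℕ} {r j : ℤ} (h : Pc n r j ≠ 0) : 0 ≤ j ∧ j ≤ r ∧ r ≤ n := by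
  by_contra hc; exact h (Pc_eq_zero n r j hc)

/-- the Laurent-polynomial value `c^{(n)}_{r,j}(x)` -/
def Wf (x : RatFunc ℚ) (n : ℕ) (r j : ℤ) : RatFunc ℚ := lvalAt (Pc n r j) (n^2) x

lemma Wf_zero (x : RatFunc ℚ) {n : ℕ} {r j : ℤ} (h : ¬(0 ≤ j ∧ j ≤ r ∧ r ≤ n)) :
    Wf x n r j = 0 := by
  simp [Wf, lvalAt, Pc_eq_zero n r j h]

lemma Wf_ne_zero {x : RatFunc ℚ} {n : ℕ} {r j : ℤ} (h : Wf x n r j ≠ 0) :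
    0 ≤ j ∧ j ≤ r ∧ r ≤ n := by
  by_contra hc; exact h (Wf_zero x hc)

lemma Wf_base (x : RatFunc ℚ) : Wf x 0 0 0 = 1 := by
  simp [Wf, lvalAt, Pc]

lemma Wf_base' (x : RatFunc ℚ) {r j : ℤ} (h : ¬(r = 0 ∧ j = 0)) : Wf x 0 r j = 0 := by
  simp [Wf, lvalAt, Pc, if_neg h]

/-- helper for the recursion -/
private lemma lval_term (x : RatFunc ℚ) (hx : x ≠ 0) (E : ℤ) (p : Polynomial ℕ)
    (s t : ℕ) (hp : p ≠ 0 → 0 ≤ E + t - s) :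
    x ^ (-(t:ℤ)) * (x ^ (E + t - s).toNat * Polynomial.eval₂ (Nat.castRingHom (RatFunc ℚ)) x p)
      = x ^ E * (x ^ (-(s:ℤ)) * Polynomial.eval₂ (Nat.castRingHom (RatFunc ℚ)) x p) := by
  by_cases h0 : p = 0
  · simp [h0]
  · have hE : ((E + t - s).toNat : ℤ) = E + t - s := Int.toNat_of_nonneg (hp h0)
    rw [← zpow_natCast x (E + t - s).toNat, hE, ← mul_assoc, ← zpow_add₀ hx,
      show -(t:ℤ) + (E + t - s) = E + -(s:ℤ) by ring, zpow_add₀ hx, mul_assoc]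

lemma Wf_rec (x : RatFunc ℚ) (hx : x ≠ 0) (n : ℕ) (r j : ℤ) :
    Wf x (n+1) r j = x ^ (2*r - 4*j) *
        (Wf x n r j + if r ≤ (n:ℤ) + 1 then Wf x n (r-2) (j-1) else 0)
      + x ^ (2*r - 4*j - 1) * Wf x n (r-1) j
      + x ^ (2*r - 4*j + 1) * Wf x n (r-1) (j-1) := by
  have hd : (((n+1)^2 : ℕ) : ℤ) - ((n^2 : ℕ) : ℤ) = 2*(n:ℤ) + 1 := by push_cast; ring
  have cast1 : ((2*n+1 : ℤ) + 2*r - 4*j) = (2*r - 4*j) + ((n+1)^2 : ℕ) - (n^2 : ℕ) := by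
    linarith [hd]
  have cast2 : ((2*n : ℤ) + 2*r - 4*j) = (2*r - 4*j - 1) + ((n+1)^2 : ℕ) - (n^2 : ℕ) := by
    linarith [hd]
  have cast3 : ((2*n+2 : ℤ) + 2*r - 4*j) = (2*r - 4*j + 1) + ((n+1)^2 : ℕ) - (n^2 : ℕ) := by
    linarith [hd]
  have hp1 : (Pc n r j + if r ≤ (n:ℤ) + 1 then Pc n (r-2) (j-1) else 0) ≠ 0 →
      0 ≤ (2*r - 4*j) + (((n+1)^2 : ℕ):ℤ) - ((n^2 : ℕ):ℤ) := by
    intro hne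
    have : Pc n r j ≠ 0 ∨ (if r ≤ (n:ℤ) + 1 then Pc n (r-2) (j-1) else 0) ≠ 0 := by
      by_contra hc; push_neg at hc
      exact hne (by rw [hc.1, hc.2, add_zero])
    rcases this with h | h
    · obtain ⟨a, b, c⟩ := Pc_ne_zero h; linarith [hd]
    · split_ifs at h with hg
      · obtain ⟨a, b, c⟩ := Pc_ne_zero h; linarith [hd]
      · exact absurd rfl h
  have hp2 : Pc n (r-1) j ≠ 0 → 0 ≤ (2*r - 4*j - 1) + (((n+1)^2 : ℕ):ℤ) - ((n^2 : ℕ):ℤ) := by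
    intro hne; obtain ⟨a, b, c⟩ := Pc_ne_zero hne; linarith [hd]
  have hp3 : Pc n (r-1) (j-1) ≠ 0 → 0 ≤ (2*r - 4*j + 1) + (((n+1)^2 : ℕ):ℤ) - ((n^2 : ℕ):ℤ) := by
    intro hne; obtain ⟨a, b, c⟩ := Pc_ne_zero hne; linarith [hd]
  have key : Pc (n+1) r j =
      Polynomial.X ^ ((2*r - 4*j) + (((n+1)^2 : ℕ):ℤ) - ((n^2 : ℕ):ℤ)).toNat *
          (Pc n r j + if r ≤ (n:ℤ) + 1 then Pc n (r-2) (j-1) else 0)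
      + Polynomial.X ^ ((2*r - 4*j - 1) + (((n+1)^2 : ℕ):ℤ) - ((n^2 : ℕ):ℤ)).toNat * Pc n (r-1) j
      + Polynomial.X ^ ((2*r - 4*j + 1) + (((n+1)^2 : ℕ):ℤ) - ((n^2 : ℕ):ℤ)).toNat
          * Pc n (r-1) (j-1) := by
    rw [Pc, cast1, cast2, cast3]
  show x ^ (-(((n+1)^2 : ℕ):ℤ)) * Polynomial.eval₂ (Nat.castRingHom (RatFunc ℚ)) x (Pc (n+1) r j)
      = _
  rw [key, Polynomial.eval₂_add, Polynomial.eval₂_add, Polynomial.eval₂_mul, Polynomial.eval₂_mul,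
    Polynomial.eval₂_mul, Polynomial.eval₂_X_pow, Polynomial.eval₂_X_pow,
    Polynomial.eval₂_X_pow, mul_add, mul_add]
  rw [lval_term x hx (2*r-4*j) _ (n^2) ((n+1)^2) hp1,
      lval_term x hx (2*r-4*j-1) _ (n^2) ((n+1)^2) hp2,
      lval_term x hx (2*r-4*j+1) _ (n^2) ((n+1)^2) hp3]
  rw [Polynomial.eval₂_add, mul_add, apply_ite (Polynomial.eval₂ (Nat.castRingHom (RatFunc ℚ)) x),
    Polynomial.eval₂_zero, apply_ite (x ^ (-((n^2:ℕ):ℤ)) * ·), mul_zero]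
  rfl

lemma Wf_bar : ∀ (n : ℕ) (r j : ℤ),
    Wf (RatFunc.X)⁻¹ n r j = Wf RatFunc.X n r (r - j) := by
  have hX : (RatFunc.X : RatFunc ℚ) ≠ 0 := RatFunc.X_ne_zero
  have hXi : (RatFunc.X : RatFunc ℚ)⁻¹ ≠ 0 := inv_ne_zero hX
  intro n
  induction n with
  | zero =>
    intro r j
    by_cases h : r = 0 ∧ j = 0
    · obtain ⟨rfl, rfl⟩ := h; simp [Wf_base]
    · rw [Wf_base' _ h, Wf_base' _ (by push_neg at h ⊢; intro hr; subst hr; simpa using h)]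
  | succ n ih =>
    intro r j
    rw [Wf_rec _ hXi, Wf_rec _ hX, ih, ih, ih, ih]
    simp only [inv_zpow, ← zpow_neg]
    ring_nf

open Finset in
private lemma sum_Icc_shift {M : Type*} [AddCommMonoid M] (g : ℤ → M) (a b c : ℤ) :
    ∑ x ∈ Finset.Icc a b, g (x - c) = ∑ x ∈ Finset.Icc (a - c) (b - c), g x := by
  apply Finset.sum_nbij' (fun x => x - c) (fun x => x + c) <;>
    simp_all [Finset.mem_Icc] <;> omega

open Finset in
private lemma sum_Icc_vanish {M : Type*} [AddCommMonoid M] (g : ℤ → M) {a b a' b' : ℤ}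
    (hg : ∀ x, g x ≠ 0 → (a ≤ x ∧ x ≤ b) ∧ (a' ≤ x ∧ x ≤ b')) :
    ∑ x ∈ Finset.Icc a b, g x = ∑ x ∈ Finset.Icc a' b', g x := by
  have h1 : ∑ x ∈ Finset.Icc a b ∩ Finset.Icc a' b', g x = ∑ x ∈ Finset.Icc a b, g x :=
    Finset.sum_subset Finset.inter_subset_left (by
      intro x hx hx'
      by_contra hne
      exact hx' (Finset.mem_inter.2 ⟨Finset.mem_Icc.2 (hg x hne).1, Finset.mem_Icc.2 (hg x hne).2⟩))
  have h2 : ∑ x ∈ Finset.Icc a b ∩ Finset.Icc a' b', g x = ∑ x ∈ Finset.Icc a' b', g x :=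
    Finset.sum_subset Finset.inter_subset_right (by
      intro x hx hx'
      by_contra hne
      exact hx' (Finset.mem_inter.2 ⟨Finset.mem_Icc.2 (hg x hne).1, Finset.mem_Icc.2 (hg x hne).2⟩))
  rw [← h1, h2]

open Finset in
private lemma sum_Icc_to_range {M : Type*} [AddCommMonoid M] (g : ℤ → M) (n : ℕ) :
    ∑ x ∈ Finset.Icc (0:ℤ) (n:ℤ), g x = ∑ i ∈ Finset.range (n+1), g (i:ℤ) := by
  apply Finset.sum_nbij' (fun x : ℤ => x.toNat) (fun i : ℕ => (i:ℤ))
  · intro a ha; simp only [Finset.mem_Icc] at ha; simp only [Finset.mem_range]; omega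
  · intro a ha; simp only [Finset.mem_range] at ha; simp only [Finset.mem_Icc]; omega
  · intro a ha; simp only [Finset.mem_Icc] at ha; omega
  · intro a _; simp
  · intro a ha; simp only [Finset.mem_Icc] at ha; rw [Int.toNat_of_nonneg ha.1]

open Finset in
private lemma double_shift {M : Type*} [AddCommMonoid M] (f : ℤ → ℤ → M) (N dr dj : ℤ)
    (hdr : 0 ≤ dr) (hdj : 0 ≤ dj)
    (hvan : ∀ r j, f r j ≠ 0 →
      0 ≤ j ∧ j ≤ N ∧ 0 ≤ r ∧ r ≤ N ∧ r ≤ N + 1 - dr ∧ j ≤ N + 1 - dj) :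
    ∑ r ∈ Finset.Icc (0:ℤ) (N+1), ∑ j ∈ Finset.Icc (0:ℤ) (N+1), f (r - dr) (j - dj)
      = ∑ r ∈ Finset.Icc (0:ℤ) N, ∑ j ∈ Finset.Icc (0:ℤ) N, f r j := by
  calc ∑ r ∈ Finset.Icc (0:ℤ) (N+1), ∑ j ∈ Finset.Icc (0:ℤ) (N+1), f (r - dr) (j - dj)
      = ∑ r ∈ Finset.Icc (0:ℤ) (N+1), ∑ j ∈ Finset.Icc (0-dj) (N+1-dj), f (r - dr) j :=
        Finset.sum_congr rfl (fun r _ => sum_Icc_shift (fun j => f (r - dr) j) 0 (N+1) dj)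
    _ = ∑ r ∈ Finset.Icc (0-dr) (N+1-dr), ∑ j ∈ Finset.Icc (0-dj) (N+1-dj), f r j :=
        sum_Icc_shift (fun r => ∑ j ∈ Finset.Icc (0-dj) (N+1-dj), f r j) 0 (N+1) dr
    _ = ∑ r ∈ Finset.Icc (0:ℤ) N, ∑ j ∈ Finset.Icc (0-dj) (N+1-dj), f r j := by
        apply sum_Icc_vanish
        intro r hr
        have hex : ∃ j ∈ Finset.Icc (0-dj) (N+1-dj), f r j ≠ 0 := by
          by_contra hc
          push_neg at hc
          exact hr (Finset.sum_eq_zero hc)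
        obtain ⟨j, _, hj⟩ := hex
        obtain ⟨_, _, h3, h4, h5, _⟩ := hvan r j hj
        exact ⟨⟨by omega, by omega⟩, ⟨h3, h4⟩⟩
    _ = ∑ r ∈ Finset.Icc (0:ℤ) N, ∑ j ∈ Finset.Icc (0:ℤ) N, f r j := by
        refine Finset.sum_congr rfl (fun r _ => ?_)
        apply sum_Icc_vanish
        intro j hj
        obtain ⟨h1, h2, _, _, _, h6⟩ := hvan r j hj
        exact ⟨⟨by omega, by omega⟩, ⟨h1, h2⟩⟩

structure UqRel (A : Type uu) [Ring A] [Algebra (RatFunc ℚ) A] where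
  q : RatFunc ℚ
  E : A
  F : A
  Kp : A
  Km : A
  hq : q = RatFunc.X
  hKK : Kp * Km = Km * Kp
  hKpE : Kp * E = (q ^ 2) • (E * Kp)
  hKmE : Km * E = (q⁻¹ ^ 2) • (E * Km)
  hKpF : Kp * F = (q⁻¹ ^ 2) • (F * Kp)
  hKmF : Km * F = (q ^ 2) • (F * Km)
  hEF : E * F - F * E = (q⁻¹ - q) • (Kp - Km)
  C : A
  hC : C = F * E - q • Kp - q⁻¹ • Km

namespace UqRel
variable {A : Type uu} [Ring A] [Algebra (RatFunc ℚ) A] (h : UqRel A)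

lemma hq0 : h.q ≠ 0 := by rw [h.hq]; exact RatFunc.X_ne_zero

lemma q_mul_inv : h.q * h.q⁻¹ = 1 := mul_inv_cancel₀ h.hq0

lemma sq_cancel : h.q ^ 2 * h.q⁻¹ ^ 2 = 1 := by
  rw [← mul_pow, q_mul_inv, one_pow]

lemma sq_cancel' : h.q⁻¹ ^ 2 * h.q ^ 2 = 1 := by
  rw [← mul_pow, inv_mul_cancel₀ h.hq0, one_pow]

/-- from `X*Y = c•(Y*X)` with `c'*c = 1` deduce `Y*X = c'•(X*Y)` -/
private lemma flip {c c' : RatFunc ℚ} {X Y : A} (hcc : c' * c = 1)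
    (hxy : X * Y = c • (Y * X)) : Y * X = c' • (X * Y) := by
  rw [hxy, smul_smul, hcc, one_smul]

lemma hFKp : h.F * h.Kp = (h.q ^ 2) • (h.Kp * h.F) := flip h.sq_cancel h.hKpF
lemma hFKm : h.F * h.Km = (h.q⁻¹ ^ 2) • (h.Km * h.F) := flip h.sq_cancel' h.hKmF
lemma hEKp : h.E * h.Kp = (h.q⁻¹ ^ 2) • (h.Kp * h.E) := flip h.sq_cancel' h.hKpE
lemma hEKm : h.E * h.Km = (h.q ^ 2) • (h.Km * h.E) := flip h.sq_cancel h.hKmE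

lemma hFE : h.F * h.E = h.C + h.q • h.Kp + h.q⁻¹ • h.Km := by
  rw [h.hC]; abel

lemma hEFe : h.E * h.F = h.C + h.q⁻¹ • h.Kp + h.q • h.Km := by
  have e1 : h.E * h.F = h.F * h.E + (h.q⁻¹ - h.q) • (h.Kp - h.Km) := by
    rw [← h.hEF]; abel
  rw [e1, hFE, smul_sub, sub_smul, sub_smul]
  abel

/-- `Kp` commutes with `F*E` -/
lemma Kp_FE : h.Kp * (h.F * h.E) = h.F * h.E * h.Kp := by
  calc h.Kp * (h.F * h.E) = (h.Kp * h.F) * h.E := (mul_assoc _ _ _).symm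
    _ = (h.q⁻¹ ^ 2) • (h.F * h.Kp * h.E) := by rw [h.hKpF, smul_mul_assoc]
    _ = (h.q⁻¹ ^ 2) • (h.F * ((h.q ^ 2) • (h.E * h.Kp))) := by rw [mul_assoc, h.hKpE]
    _ = (h.q⁻¹ ^ 2 * h.q ^ 2) • (h.F * (h.E * h.Kp)) := by rw [mul_smul_comm, smul_smul]
    _ = h.F * h.E * h.Kp := by rw [h.sq_cancel', one_smul, mul_assoc]

lemma Km_FE : h.Km * (h.F * h.E) = h.F * h.E * h.Km := by
  calc h.Km * (h.F * h.E) = (h.Km * h.F) * h.E := (mul_assoc _ _ _).symm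
    _ = (h.q ^ 2) • (h.F * h.Km * h.E) := by rw [h.hKmF, smul_mul_assoc]
    _ = (h.q ^ 2) • (h.F * ((h.q⁻¹ ^ 2) • (h.E * h.Km))) := by rw [mul_assoc, h.hKmE]
    _ = (h.q ^ 2 * h.q⁻¹ ^ 2) • (h.F * (h.E * h.Km)) := by rw [mul_smul_comm, smul_smul]
    _ = h.F * h.E * h.Km := by rw [h.sq_cancel, one_smul, mul_assoc]

lemma CKp : Commute h.C h.Kp := by
  show h.C * h.Kp = h.Kp * h.C
  rw [h.hC, sub_mul, sub_mul, mul_sub, mul_sub, smul_mul_assoc, smul_mul_assoc,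
    mul_smul_comm, mul_smul_comm, h.Kp_FE, h.hKK]

lemma CKm : Commute h.C h.Km := by
  show h.C * h.Km = h.Km * h.C
  rw [h.hC, sub_mul, sub_mul, mul_sub, mul_sub, smul_mul_assoc, smul_mul_assoc,
    mul_smul_comm, mul_smul_comm, h.Km_FE, h.hKK]

lemma CKK : Commute h.C (h.Kp * h.Km) := (h.CKp).mul_right h.CKm

lemma KKE : Commute h.E (h.Kp * h.Km) := by
  show h.E * (h.Kp * h.Km) = h.Kp * h.Km * h.E
  calc h.E * (h.Kp * h.Km) = (h.E * h.Kp) * h.Km := (mul_assoc _ _ _).symm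
    _ = (h.q⁻¹ ^ 2) • (h.Kp * h.E * h.Km) := by rw [h.hEKp, smul_mul_assoc]
    _ = (h.q⁻¹ ^ 2) • (h.Kp * ((h.q ^ 2) • (h.Km * h.E))) := by rw [mul_assoc, h.hEKm]
    _ = (h.q⁻¹ ^ 2 * h.q ^ 2) • (h.Kp * (h.Km * h.E)) := by rw [mul_smul_comm, smul_smul]
    _ = h.Kp * h.Km * h.E := by rw [h.sq_cancel', one_smul, mul_assoc]

lemma KKF : Commute h.F (h.Kp * h.Km) := by
  show h.F * (h.Kp * h.Km) = h.Kp * h.Km * h.F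
  calc h.F * (h.Kp * h.Km) = (h.F * h.Kp) * h.Km := (mul_assoc _ _ _).symm
    _ = (h.q ^ 2) • (h.Kp * h.F * h.Km) := by rw [h.hFKp, smul_mul_assoc]
    _ = (h.q ^ 2) • (h.Kp * ((h.q⁻¹ ^ 2) • (h.Km * h.F))) := by rw [mul_assoc, h.hFKm]
    _ = (h.q ^ 2 * h.q⁻¹ ^ 2) • (h.Kp * (h.Km * h.F)) := by rw [mul_smul_comm, smul_smul]
    _ = h.Kp * h.Km * h.F := by rw [h.sq_cancel, one_smul, mul_assoc]

lemma c_inv_sq : h.q⁻¹ * h.q ^ 2 = h.q := by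
  rw [sq, ← mul_assoc, inv_mul_cancel₀ h.hq0, one_mul]

lemma c_sq_inv : h.q * h.q⁻¹ ^ 2 = h.q⁻¹ := by
  rw [sq, ← mul_assoc, mul_inv_cancel₀ h.hq0, one_mul]

lemma CE : Commute h.C h.E := by
  show h.C * h.E = h.E * h.C
  have e1 : h.E * h.C = (h.E * (h.F * h.E)) - h.q • (h.E * h.Kp) - h.q⁻¹ • (h.E * h.Km) := by
    rw [h.hC, mul_sub, mul_sub, mul_smul_comm, mul_smul_comm]
  have e2 : h.E * (h.F * h.E) = h.C * h.E + h.q • (h.E * h.Kp) + h.q⁻¹ • (h.E * h.Km) := by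
    calc h.E * (h.F * h.E) = (h.E * h.F) * h.E := (mul_assoc _ _ _).symm
      _ = h.C * h.E + h.q⁻¹ • (h.Kp * h.E) + h.q • (h.Km * h.E) := by
          rw [h.hEFe, add_mul, add_mul, smul_mul_assoc, smul_mul_assoc]
      _ = h.C * h.E + (h.q⁻¹ * h.q ^ 2) • (h.E * h.Kp) + (h.q * h.q⁻¹ ^ 2) • (h.E * h.Km) := by
          rw [h.hKpE, h.hKmE, smul_smul, smul_smul]
      _ = _ := by rw [h.c_inv_sq, h.c_sq_inv]
  rw [e1, e2]; abel

lemma CF : Commute h.C h.F := by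
  show h.C * h.F = h.F * h.C
  have f1 : h.C * h.F = (h.F * h.E) * h.F - h.q • (h.Kp * h.F) - h.q⁻¹ • (h.Km * h.F) := by
    rw [h.hC, sub_mul, sub_mul, smul_mul_assoc, smul_mul_assoc]
  have f2 : (h.F * h.E) * h.F = h.F * h.C + h.q⁻¹ • (h.F * h.Kp) + h.q • (h.F * h.Km) := by
    rw [mul_assoc, h.hEFe, mul_add, mul_add, mul_smul_comm, mul_smul_comm]
  rw [f1, f2, h.hKpF, h.hKmF, smul_smul, smul_smul, h.c_sq_inv, h.c_inv_sq]
  abel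


/-- generic: move an element past a power -/
private lemma move_pow {c : RatFunc ℚ} {X Y : A} (hxy : X * Y = c • (Y * X)) (m : ℕ) :
    X * Y ^ m = (c ^ m) • (Y ^ m * X) := by
  induction m with
  | zero => simp
  | succ m ih =>
    calc X * Y ^ (m+1) = (X * Y ^ m) * Y := by rw [pow_succ, mul_assoc]
      _ = (c ^ m) • (Y ^ m * (X * Y)) := by rw [ih, smul_mul_assoc, mul_assoc]
      _ = (c ^ m * c) • (Y ^ m * (Y * X)) := by rw [hxy, mul_smul_comm, smul_smul]
      _ = (c ^ (m+1)) • (Y ^ (m+1) * X) := by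
          rw [← pow_succ, pow_succ Y, mul_assoc]

/-- two-step induction for `cheb` -/
private lemma cheb_rec_aux (P : ℕ → Prop) (h0 : P 0) (h1 : P 1)
    (hstep : ∀ n, P n → P (n+1) → P (n+2)) : ∀ n, P n := by
  have : ∀ n, P n ∧ P (n+1) := by
    intro n
    induction n with
    | zero => exact ⟨h0, h1⟩
    | succ n ih => exact ⟨ih.2, hstep n ih.1 ih.2⟩
  exact fun n => (this n).1

lemma commute_cheb {x : A} (hc : Commute x h.C) (hkk : Commute x (h.Kp * h.Km)) (m : ℕ) :
    Commute x (cheb h.C (h.Kp * h.Km) m) := by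
  induction m using cheb_rec_aux with
  | h0 => simpa [cheb] using Commute.one_right x
  | h1 => simpa [cheb] using hc
  | hstep n ih1 ih2 =>
    show Commute x (cheb h.C (h.Kp * h.Km) (n+2))
    show Commute x (h.C * cheb h.C (h.Kp * h.Km) (n+1) - (h.Kp * h.Km) * cheb h.C (h.Kp * h.Km) n)
    exact ((hc.mul_right ih2).sub_right (hkk.mul_right ih1))

/-- `cheb` with an integer index, zero for negative arguments -/
def chebZ (m : ℤ) : A := if 0 ≤ m then cheb h.C (h.Kp * h.Km) m.toNat else 0

lemma chebZ_ofNat (m : ℕ) : h.chebZ (m : ℤ) = cheb h.C (h.Kp * h.Km) m := by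
  simp [chebZ]

lemma chebZ_neg {m : ℤ} (hm : m < 0) : h.chebZ m = 0 := by
  simp [chebZ, not_le.mpr hm]

lemma commute_chebZ {x : A} (hc : Commute x h.C) (hkk : Commute x (h.Kp * h.Km)) (m : ℤ) :
    Commute x (h.chebZ m) := by
  rw [chebZ]; split_ifs
  · exact h.commute_cheb hc hkk _
  · exact Commute.zero_right x

lemma chebZ_zero : h.chebZ 0 = (1:A) := by simp [chebZ, cheb]

lemma chebZ_one : h.chebZ 1 = h.C := by simp [chebZ, cheb]

lemma chebZ_mul_C {m : ℤ} (hm : 0 ≤ m) :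
    h.chebZ m * h.C = h.chebZ (m + 1) + (h.Kp * h.Km) * h.chebZ (m - 1) := by
  rcases eq_or_lt_of_le hm with rfl | hlt
  · rw [h.chebZ_zero, h.chebZ_neg (by norm_num : (0:ℤ) - 1 < 0), mul_zero, add_zero,
      zero_add, h.chebZ_one, one_mul]
  · obtain ⟨k, rfl⟩ : ∃ k : ℕ, m = (k : ℤ) + 1 := by
      refine ⟨(m - 1).toNat, ?_⟩
      rw [Int.toNat_of_nonneg (by omega)]; ring
    rw [show (k:ℤ) + 1 = ((k+1 : ℕ) : ℤ) by push_cast; ring, h.chebZ_ofNat,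
      show ((k+1:ℕ):ℤ) + 1 = ((k+2 : ℕ):ℤ) by push_cast; ring, h.chebZ_ofNat,
      show ((k+1:ℕ):ℤ) - 1 = ((k : ℕ):ℤ) by push_cast; ring, h.chebZ_ofNat]
    have hcom : cheb h.C (h.Kp * h.Km) (k+1) * h.C = h.C * cheb h.C (h.Kp * h.Km) (k+1) :=
      (h.commute_cheb (Commute.refl h.C) h.CKK (k+1)).symm
    rw [hcom]
    have : cheb h.C (h.Kp * h.Km) (k+2)
        = h.C * cheb h.C (h.Kp * h.Km) (k+1) - (h.Kp * h.Km) * cheb h.C (h.Kp * h.Km) k := rfl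
    rw [this]; abel

/-- the monomial `K₋^j K₊^{r-j}` -/
def mono (r j : ℤ) : A := h.Km ^ j.toNat * h.Kp ^ (r - j).toNat

lemma commute_Kp_pow_Km (b : ℕ) : h.Kp ^ b * h.Km = h.Km * h.Kp ^ b :=
  (show Commute h.Kp h.Km from h.hKK).pow_left b


lemma F_mul_mono {r j : ℤ} (hj : 0 ≤ j) (hjr : j ≤ r) :
    h.F * h.mono r j = (h.q ^ (2*r - 4*j)) • (h.mono r j * h.F) := by
  set a := j.toNat with ha
  set b := (r - j).toNat with hb
  have haj : (a : ℤ) = j := Int.toNat_of_nonneg hj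
  have hbj : (b : ℤ) = r - j := Int.toNat_of_nonneg (by omega)
  have e1 : h.F * h.Km ^ a = ((h.q⁻¹ ^ 2) ^ a) • (h.Km ^ a * h.F) := move_pow h.hFKm a
  have e2 : h.F * h.Kp ^ b = ((h.q ^ 2) ^ b) • (h.Kp ^ b * h.F) := move_pow h.hFKp b
  have sc : ((h.q⁻¹ ^ 2) ^ a : RatFunc ℚ) * (h.q ^ 2) ^ b = h.q ^ (2*r - 4*j) := by
    rw [inv_pow, inv_pow, ← zpow_natCast (h.q ^ 2) a, ← zpow_natCast (h.q ^ 2) b,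
      ← zpow_neg, ← zpow_add₀ (pow_ne_zero 2 h.hq0), ← zpow_natCast h.q 2, ← zpow_mul,
      show (((2:ℕ):ℤ)) * (-(a:ℤ) + b) = 2*r - 4*j by push_cast; omega]
  calc h.F * (h.Km ^ a * h.Kp ^ b) = (h.F * h.Km ^ a) * h.Kp ^ b := (mul_assoc _ _ _).symm
    _ = ((h.q⁻¹ ^ 2) ^ a) • (h.Km ^ a * (h.F * h.Kp ^ b)) := by
        rw [e1, smul_mul_assoc, mul_assoc]
    _ = ((h.q⁻¹ ^ 2) ^ a * (h.q ^ 2) ^ b) • (h.Km ^ a * (h.Kp ^ b * h.F)) := by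
        rw [e2, mul_smul_comm, smul_smul]
    _ = (h.q ^ (2*r - 4*j)) • (h.Km ^ a * h.Kp ^ b * h.F) := by rw [sc, mul_assoc]

lemma mono_mul_Kp {r j : ℤ} (hjr : j ≤ r) :
    h.mono r j * h.Kp = h.mono (r+1) j := by
  rw [mono, mono, show (r + 1 - j).toNat = (r - j).toNat + 1 by omega, pow_succ, mul_assoc]

lemma mono_mul_Km {r j : ℤ} (hj : 0 ≤ j) (hjr : j ≤ r) :
    h.mono r j * h.Km = h.mono (r+1) (j+1) := by
  rw [mono, mono, show (j + 1).toNat = j.toNat + 1 by omega,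
    show (r + 1 - (j+1)).toNat = (r - j).toNat by omega, pow_succ, mul_assoc,
    mul_assoc, ← h.commute_Kp_pow_Km, ← mul_assoc]

lemma mono_mul_KK {r j : ℤ} (hj : 0 ≤ j) (hjr : j ≤ r) :
    h.mono r j * (h.Kp * h.Km) = h.mono (r+2) (j+1) := by
  rw [← mul_assoc, h.mono_mul_Kp hjr, h.mono_mul_Km hj (by omega),
    show r + 1 + 1 = r + 2 by ring]

/-- the `E ↔ F`, `K₊ ↔ K₋` symmetry -/
def swap : UqRel A where
  q := h.q
  E := h.F
  F := h.E
  Kp := h.Km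
  Km := h.Kp
  hq := h.hq
  hKK := h.hKK.symm
  hKpE := h.hKmF
  hKmE := h.hKpF
  hKpF := h.hKmE
  hKmF := h.hKpE
  hEF := by
    rw [show h.F * h.E - h.E * h.F = -(h.E * h.F - h.F * h.E) by abel, h.hEF, ← smul_neg,
      neg_sub]
  C := h.C
  hC := by rw [h.hEFe]; abel


lemma zq1 {z : ℤ} : h.q ^ z * h.q = h.q ^ (z + 1) := (zpow_add_one₀ h.hq0 z).symm

lemma zq2 {z : ℤ} : h.q ^ z * h.q⁻¹ = h.q ^ (z - 1) := (zpow_sub_one₀ h.hq0 z).symm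

lemma stepF (n : ℕ) {r j : ℤ} (hr : 0 ≤ r) (hrn : r ≤ (n:ℤ)) (w : RatFunc ℚ)
    (hw : w ≠ 0 → 0 ≤ j ∧ j ≤ r) :
    h.F * (w • (h.mono r j * h.chebZ ((n:ℤ) - r))) * h.E
      = (w * h.q ^ (2*r-4*j)) • (h.mono r j * h.chebZ ((n:ℤ) + 1 - r))
      + (w * h.q ^ (2*r-4*j)) • (h.mono (r+2) (j+1) * h.chebZ ((n:ℤ) - 1 - r))
      + (w * h.q ^ (2*r-4*j+1)) • (h.mono (r+1) j * h.chebZ ((n:ℤ) - r))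
      + (w * h.q ^ (2*r-4*j-1)) • (h.mono (r+1) (j+1) * h.chebZ ((n:ℤ) - r)) := by
  by_cases hw0 : w = 0
  · simp [hw0]
  obtain ⟨hj, hjr⟩ := hw hw0
  have cEZ : ∀ m : ℤ, h.E * h.chebZ m = h.chebZ m * h.E :=
    fun m => h.commute_chebZ h.CE.symm h.KKE m
  have cCZ : ∀ m : ℤ, h.C * h.chebZ m = h.chebZ m * h.C :=
    fun m => h.commute_chebZ (Commute.refl h.C) h.CKK m
  have key1 : h.F * (w • (h.mono r j * h.chebZ ((n:ℤ) - r))) * h.E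
      = w • ((h.mono r j * (h.C * h.chebZ ((n:ℤ) - r))
          + h.q • (h.mono (r+1) j * h.chebZ ((n:ℤ) - r))
          + h.q⁻¹ • (h.mono (r+1) (j+1) * h.chebZ ((n:ℤ) - r)))
            |> (fun X => (h.q ^ (2*r-4*j)) • X)) := by
    rw [mul_smul_comm, smul_mul_assoc]
    congr 1
    show h.F * (h.mono r j * h.chebZ ((n:ℤ) - r)) * h.E = _
    rw [← mul_assoc h.F (h.mono r j) (h.chebZ ((n:ℤ) - r)),
      mul_assoc (h.F * h.mono r j) (h.chebZ ((n:ℤ) - r)) h.E, ← cEZ,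
      ← mul_assoc (h.F * h.mono r j) h.E (h.chebZ ((n:ℤ) - r)),
      h.F_mul_mono hj hjr, smul_mul_assoc, smul_mul_assoc]
    show (h.q ^ (2*r-4*j)) • (h.mono r j * h.F * h.E * h.chebZ ((n:ℤ) - r)) = _
    congr 1
    rw [mul_assoc (h.mono r j) h.F h.E, h.hFE, mul_add, mul_add, mul_smul_comm, mul_smul_comm,
      add_mul, add_mul, smul_mul_assoc, smul_mul_assoc, mul_assoc (h.mono r j) h.C,
      h.mono_mul_Kp hjr, h.mono_mul_Km hj hjr]
  have key3 : h.mono r j * (h.C * h.chebZ ((n:ℤ) - r))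
      = h.mono r j * h.chebZ ((n:ℤ) + 1 - r)
        + h.mono (r+2) (j+1) * h.chebZ ((n:ℤ) - 1 - r) := by
    rw [cCZ, h.chebZ_mul_C (by omega : (0:ℤ) ≤ (n:ℤ) - r), mul_add,
      ← mul_assoc (h.mono r j) (h.Kp * h.Km), h.mono_mul_KK hj hjr,
      show (n:ℤ) - r + 1 = (n:ℤ) + 1 - r by ring, show (n:ℤ) - r - 1 = (n:ℤ) - 1 - r by ring]
  rw [key1]
  show w • ((h.q ^ (2*r-4*j)) • _) = _
  rw [key3]
  simp only [smul_add, smul_smul]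
  rw [h.zq1, h.zq2]

theorem mainF (W : ℕ → ℤ → ℤ → RatFunc ℚ)
    (hW0 : W 0 0 0 = 1)
    (hWv : ∀ (n : ℕ) (r j : ℤ), W n r j ≠ 0 → 0 ≤ j ∧ j ≤ r ∧ r ≤ (n:ℤ))
    (hWrec : ∀ (n : ℕ) (r j : ℤ), W (n+1) r j
      = h.q ^ (2*r-4*j) * (W n r j + if r ≤ (n:ℤ)+1 then W n (r-2) (j-1) else 0)
      + h.q ^ (2*r-4*j-1) * W n (r-1) j
      + h.q ^ (2*r-4*j+1) * W n (r-1) (j-1)) :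
    ∀ n : ℕ, h.F ^ n * h.E ^ n
      = ∑ r ∈ Finset.Icc (0:ℤ) (n:ℤ), ∑ j ∈ Finset.Icc (0:ℤ) (n:ℤ),
          W n r j • (h.mono r j * h.chebZ ((n:ℤ) - r)) := by
  intro n
  induction n with
  | zero =>
    simp only [Nat.cast_zero, Finset.Icc_self, Finset.sum_singleton, pow_zero, one_mul]
    rw [hW0, one_smul, sub_zero, h.chebZ_zero, mul_one]
    show (1:A) = h.mono 0 0
    simp [mono]
  | succ n ih =>
    push_cast
    have step1 : h.F ^ (n+1) * h.E ^ (n+1) = h.F * (h.F ^ n * h.E ^ n) * h.E := by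
      rw [pow_succ' h.F, pow_succ h.E, mul_assoc h.F (h.F^n),
        ← mul_assoc (h.F^n) (h.E^n) h.E, ← mul_assoc h.F (h.F^n * h.E^n) h.E]
    have hA : h.F ^ (n+1) * h.E ^ (n+1)
        = (∑ r ∈ Finset.Icc (0:ℤ) (n:ℤ), ∑ j ∈ Finset.Icc (0:ℤ) (n:ℤ),
            (W n r j * h.q ^ (2*r-4*j)) • (h.mono r j * h.chebZ ((n:ℤ) + 1 - r)))
        + (∑ r ∈ Finset.Icc (0:ℤ) (n:ℤ), ∑ j ∈ Finset.Icc (0:ℤ) (n:ℤ),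
            (W n r j * h.q ^ (2*r-4*j)) • (h.mono (r+2) (j+1) * h.chebZ ((n:ℤ) - 1 - r)))
        + (∑ r ∈ Finset.Icc (0:ℤ) (n:ℤ), ∑ j ∈ Finset.Icc (0:ℤ) (n:ℤ),
            (W n r j * h.q ^ (2*r-4*j+1)) • (h.mono (r+1) j * h.chebZ ((n:ℤ) - r)))
        + (∑ r ∈ Finset.Icc (0:ℤ) (n:ℤ), ∑ j ∈ Finset.Icc (0:ℤ) (n:ℤ),
            (W n r j * h.q ^ (2*r-4*j-1)) • (h.mono (r+1) (j+1) * h.chebZ ((n:ℤ) - r))) := by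
      calc h.F ^ (n+1) * h.E ^ (n+1)
          = ∑ r ∈ Finset.Icc (0:ℤ) (n:ℤ), ∑ j ∈ Finset.Icc (0:ℤ) (n:ℤ),
              h.F * (W n r j • (h.mono r j * h.chebZ ((n:ℤ) - r))) * h.E := by
            rw [step1, ih]; simp only [Finset.mul_sum, Finset.sum_mul]
        _ = ∑ r ∈ Finset.Icc (0:ℤ) (n:ℤ), ∑ j ∈ Finset.Icc (0:ℤ) (n:ℤ),
              ((W n r j * h.q ^ (2*r-4*j)) • (h.mono r j * h.chebZ ((n:ℤ) + 1 - r))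
              + (W n r j * h.q ^ (2*r-4*j)) • (h.mono (r+2) (j+1) * h.chebZ ((n:ℤ) - 1 - r))
              + (W n r j * h.q ^ (2*r-4*j+1)) • (h.mono (r+1) j * h.chebZ ((n:ℤ) - r))
              + (W n r j * h.q ^ (2*r-4*j-1)) • (h.mono (r+1) (j+1) * h.chebZ ((n:ℤ) - r))) :=
            Finset.sum_congr rfl (fun r hr => Finset.sum_congr rfl (fun j _ => by
              rw [Finset.mem_Icc] at hr
              exact h.stepF n hr.1 hr.2 _
                (fun hne => ⟨(hWv n r j hne).1, (hWv n r j hne).2.1⟩)))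
        _ = _ := by simp only [Finset.sum_add_distrib]
    have hB : (∑ r ∈ Finset.Icc (0:ℤ) ((n:ℤ)+1), ∑ j ∈ Finset.Icc (0:ℤ) ((n:ℤ)+1),
            W (n+1) r j • (h.mono r j * h.chebZ ((n:ℤ) + 1 - r)))
        = (∑ r ∈ Finset.Icc (0:ℤ) ((n:ℤ)+1), ∑ j ∈ Finset.Icc (0:ℤ) ((n:ℤ)+1),
            (h.q ^ (2*r-4*j) * W n r j) • (h.mono r j * h.chebZ ((n:ℤ) + 1 - r)))
        + (∑ r ∈ Finset.Icc (0:ℤ) ((n:ℤ)+1), ∑ j ∈ Finset.Icc (0:ℤ) ((n:ℤ)+1),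
            (h.q ^ (2*r-4*j) * W n (r-2) (j-1)) • (h.mono r j * h.chebZ ((n:ℤ) + 1 - r)))
        + (∑ r ∈ Finset.Icc (0:ℤ) ((n:ℤ)+1), ∑ j ∈ Finset.Icc (0:ℤ) ((n:ℤ)+1),
            (h.q ^ (2*r-4*j-1) * W n (r-1) j) • (h.mono r j * h.chebZ ((n:ℤ) + 1 - r)))
        + (∑ r ∈ Finset.Icc (0:ℤ) ((n:ℤ)+1), ∑ j ∈ Finset.Icc (0:ℤ) ((n:ℤ)+1),
            (h.q ^ (2*r-4*j+1) * W n (r-1) (j-1)) • (h.mono r j * h.chebZ ((n:ℤ) + 1 - r))) := by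
      calc _ = ∑ r ∈ Finset.Icc (0:ℤ) ((n:ℤ)+1), ∑ j ∈ Finset.Icc (0:ℤ) ((n:ℤ)+1),
            ((h.q ^ (2*r-4*j) * W n r j) • (h.mono r j * h.chebZ ((n:ℤ) + 1 - r))
            + (h.q ^ (2*r-4*j) * W n (r-2) (j-1)) • (h.mono r j * h.chebZ ((n:ℤ) + 1 - r))
            + (h.q ^ (2*r-4*j-1) * W n (r-1) j) • (h.mono r j * h.chebZ ((n:ℤ) + 1 - r))
            + (h.q ^ (2*r-4*j+1) * W n (r-1) (j-1)) • (h.mono r j * h.chebZ ((n:ℤ) + 1 - r))) :=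
          Finset.sum_congr rfl (fun r hr => Finset.sum_congr rfl (fun j _ => by
            rw [Finset.mem_Icc] at hr
            rw [hWrec n r j, if_pos (by omega : r ≤ (n:ℤ)+1)]
            simp only [mul_add, add_smul]))
        _ = _ := by simp only [Finset.sum_add_distrib]
    have he1 : (∑ r ∈ Finset.Icc (0:ℤ) ((n:ℤ)+1), ∑ j ∈ Finset.Icc (0:ℤ) ((n:ℤ)+1),
            (h.q ^ (2*r-4*j) * W n r j) • (h.mono r j * h.chebZ ((n:ℤ) + 1 - r)))
        = ∑ r ∈ Finset.Icc (0:ℤ) (n:ℤ), ∑ j ∈ Finset.Icc (0:ℤ) (n:ℤ),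
            (W n r j * h.q ^ (2*r-4*j)) • (h.mono r j * h.chebZ ((n:ℤ) + 1 - r)) := by
      calc _ = ∑ r ∈ Finset.Icc (0:ℤ) ((n:ℤ)+1), ∑ j ∈ Finset.Icc (0:ℤ) ((n:ℤ)+1),
            (W n (r-0) (j-0) * h.q ^ (2*(r-0)-4*(j-0)))
              • (h.mono (r-0) (j-0) * h.chebZ ((n:ℤ) + 1 - (r-0))) :=
            Finset.sum_congr rfl (fun r _ => Finset.sum_congr rfl (fun j _ => by
              rw [sub_zero, sub_zero, mul_comm (W n r j)]))
        _ = _ := by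
            refine double_shift
              (fun r j => (W n r j * h.q ^ (2*r-4*j))
                • (h.mono r j * h.chebZ ((n:ℤ) + 1 - r))) (n:ℤ) 0 0 le_rfl le_rfl ?_
            intro r j hne
            have hW : W n r j ≠ 0 := fun h0 => hne (by simp only [h0, zero_mul, zero_smul])
            obtain ⟨h1, h2, h3⟩ := hWv n r j hW
            exact ⟨h1, by omega, by omega, h3, by omega, by omega⟩
    have he2 : (∑ r ∈ Finset.Icc (0:ℤ) ((n:ℤ)+1), ∑ j ∈ Finset.Icc (0:ℤ) ((n:ℤ)+1),
            (h.q ^ (2*r-4*j) * W n (r-2) (j-1)) • (h.mono r j * h.chebZ ((n:ℤ) + 1 - r)))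
        = ∑ r ∈ Finset.Icc (0:ℤ) (n:ℤ), ∑ j ∈ Finset.Icc (0:ℤ) (n:ℤ),
            (W n r j * h.q ^ (2*r-4*j)) • (h.mono (r+2) (j+1) * h.chebZ ((n:ℤ) - 1 - r)) := by
      calc _ = ∑ r ∈ Finset.Icc (0:ℤ) ((n:ℤ)+1), ∑ j ∈ Finset.Icc (0:ℤ) ((n:ℤ)+1),
            (W n (r-2) (j-1) * h.q ^ (2*(r-2)-4*(j-1)))
              • (h.mono ((r-2)+2) ((j-1)+1) * h.chebZ ((n:ℤ) - 1 - (r-2))) :=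
            Finset.sum_congr rfl (fun r _ => Finset.sum_congr rfl (fun j _ => by
              rw [show 2*(r-2)-4*(j-1) = 2*r-4*j by ring, show (r-2)+2 = r by ring,
                show (j-1)+1 = j by ring, show (n:ℤ)-1-(r-2) = (n:ℤ)+1-r by ring,
                mul_comm (W n (r-2) (j-1))]))
        _ = _ := by
            refine double_shift
              (fun r j => (W n r j * h.q ^ (2*r-4*j))
                • (h.mono (r+2) (j+1) * h.chebZ ((n:ℤ) - 1 - r))) (n:ℤ) 2 1
                (by norm_num) (by norm_num) ?_
            intro r j hne
            have hW : W n r j ≠ 0 := fun h0 => hne (by simp only [h0, zero_mul, zero_smul])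
            have hch : r ≤ (n:ℤ) - 1 := by
              by_contra h0
              exact hne (by
                simp only [h.chebZ_neg (show (n:ℤ) - 1 - r < 0 by omega), mul_zero, smul_zero])
            obtain ⟨h1, h2, h3⟩ := hWv n r j hW
            exact ⟨h1, by omega, by omega, h3, by omega, by omega⟩
    have he3 : (∑ r ∈ Finset.Icc (0:ℤ) ((n:ℤ)+1), ∑ j ∈ Finset.Icc (0:ℤ) ((n:ℤ)+1),
            (h.q ^ (2*r-4*j-1) * W n (r-1) j) • (h.mono r j * h.chebZ ((n:ℤ) + 1 - r)))
        = ∑ r ∈ Finset.Icc (0:ℤ) (n:ℤ), ∑ j ∈ Finset.Icc (0:ℤ) (n:ℤ),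
            (W n r j * h.q ^ (2*r-4*j+1)) • (h.mono (r+1) j * h.chebZ ((n:ℤ) - r)) := by
      calc _ = ∑ r ∈ Finset.Icc (0:ℤ) ((n:ℤ)+1), ∑ j ∈ Finset.Icc (0:ℤ) ((n:ℤ)+1),
            (W n (r-1) (j-0) * h.q ^ (2*(r-1)-4*(j-0)+1))
              • (h.mono ((r-1)+1) (j-0) * h.chebZ ((n:ℤ) - (r-1))) :=
            Finset.sum_congr rfl (fun r _ => Finset.sum_congr rfl (fun j _ => by
              rw [sub_zero, show 2*(r-1)-4*j+1 = 2*r-4*j-1 by ring, show (r-1)+1 = r by ring,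
                show (n:ℤ)-(r-1) = (n:ℤ)+1-r by ring, mul_comm (W n (r-1) j)]))
        _ = _ := by
            refine double_shift
              (fun r j => (W n r j * h.q ^ (2*r-4*j+1))
                • (h.mono (r+1) j * h.chebZ ((n:ℤ) - r))) (n:ℤ) 1 0
                (by norm_num) (by norm_num) ?_
            intro r j hne
            have hW : W n r j ≠ 0 := fun h0 => hne (by simp only [h0, zero_mul, zero_smul])
            obtain ⟨h1, h2, h3⟩ := hWv n r j hW
            exact ⟨h1, by omega, by omega, h3, by omega, by omega⟩
    have he4 : (∑ r ∈ Finset.Icc (0:ℤ) ((n:ℤ)+1), ∑ j ∈ Finset.Icc (0:ℤ) ((n:ℤ)+1),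
            (h.q ^ (2*r-4*j+1) * W n (r-1) (j-1)) • (h.mono r j * h.chebZ ((n:ℤ) + 1 - r)))
        = ∑ r ∈ Finset.Icc (0:ℤ) (n:ℤ), ∑ j ∈ Finset.Icc (0:ℤ) (n:ℤ),
            (W n r j * h.q ^ (2*r-4*j-1)) • (h.mono (r+1) (j+1) * h.chebZ ((n:ℤ) - r)) := by
      calc _ = ∑ r ∈ Finset.Icc (0:ℤ) ((n:ℤ)+1), ∑ j ∈ Finset.Icc (0:ℤ) ((n:ℤ)+1),
            (W n (r-1) (j-1) * h.q ^ (2*(r-1)-4*(j-1)-1))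
              • (h.mono ((r-1)+1) ((j-1)+1) * h.chebZ ((n:ℤ) - (r-1))) :=
            Finset.sum_congr rfl (fun r _ => Finset.sum_congr rfl (fun j _ => by
              rw [show 2*(r-1)-4*(j-1)-1 = 2*r-4*j+1 by ring, show (r-1)+1 = r by ring,
                show (j-1)+1 = j by ring, show (n:ℤ)-(r-1) = (n:ℤ)+1-r by ring,
                mul_comm (W n (r-1) (j-1))]))
        _ = _ := by
            refine double_shift
              (fun r j => (W n r j * h.q ^ (2*r-4*j-1))
                • (h.mono (r+1) (j+1) * h.chebZ ((n:ℤ) - r))) (n:ℤ) 1 1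
                (by norm_num) (by norm_num) ?_
            intro r j hne
            have hW : W n r j ≠ 0 := fun h0 => hne (by simp only [h0, zero_mul, zero_smul])
            obtain ⟨h1, h2, h3⟩ := hWv n r j hW
            exact ⟨h1, by omega, by omega, h3, by omega, by omega⟩
    rw [hA, hB, he1, he2, he3, he4]

end UqRel

lemma Wf_diag (x : RatFunc ℚ) (hx : x ≠ 0) : ∀ n : ℕ, Wf x n 0 0 = 1 := by
  intro n
  induction n with
  | zero => exact Wf_base x
  | succ n ih =>
    have z1 : Wf x n (0-2) (0-1) = 0 := Wf_zero x (by omega)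
    have z2 : Wf x n (0-1) 0 = 0 := Wf_zero x (by omega)
    have z3 : Wf x n (0-1) (0-1) = 0 := Wf_zero x (by omega)
    rw [Wf_rec x hx n 0 0, ih, z1, z2, z3]
    simp

namespace UqRel
variable {A : Type uu} [Ring A] [Algebra (RatFunc ℚ) A] (h : UqRel A)

lemma chebZ_natsub (n r : ℕ) (hr : r ≤ n) :
    h.chebZ ((n:ℤ) - (r:ℤ)) = cheb h.C (h.Kp * h.Km) (n - r) := by
  rw [show (n:ℤ) - (r:ℤ) = ((n - r : ℕ) : ℤ) by omega, chebZ_ofNat]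

lemma mono_nat (r j : ℕ) : h.mono (r:ℤ) (j:ℤ) = h.Km ^ j * h.Kp ^ (r - j) := by
  rw [mono, Int.toNat_natCast, Int.toNat_sub]

theorem final_F (n : ℕ) : h.F ^ n * h.E ^ n
    = ∑ r ∈ Finset.range (n+1), (∑ j ∈ Finset.range (r+1),
        Wf RatFunc.X n r j • (h.Km ^ j * h.Kp ^ (r - j))) * cheb h.C (h.Kp * h.Km) (n - r) := by
  have hmain := h.mainF (Wf RatFunc.X) (Wf_base _)
    (fun n r j hne => Wf_ne_zero hne)
    (fun n r j => by rw [h.hq]; exact Wf_rec RatFunc.X RatFunc.X_ne_zero n r j) n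
  rw [hmain]
  calc ∑ r ∈ Finset.Icc (0:ℤ) (n:ℤ), ∑ j ∈ Finset.Icc (0:ℤ) (n:ℤ),
        Wf RatFunc.X n r j • (h.mono r j * h.chebZ ((n:ℤ) - r))
      = ∑ r ∈ Finset.Icc (0:ℤ) (n:ℤ),
          (∑ j ∈ Finset.Icc (0:ℤ) r, Wf RatFunc.X n r j • h.mono r j) * h.chebZ ((n:ℤ) - r) :=
        Finset.sum_congr rfl (fun r hr => by
          calc ∑ j ∈ Finset.Icc (0:ℤ) (n:ℤ),
                Wf RatFunc.X n r j • (h.mono r j * h.chebZ ((n:ℤ) - r))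
              = ∑ j ∈ Finset.Icc (0:ℤ) (n:ℤ),
                  (Wf RatFunc.X n r j • h.mono r j) * h.chebZ ((n:ℤ) - r) :=
                Finset.sum_congr rfl (fun j _ => (smul_mul_assoc _ _ _).symm)
            _ = (∑ j ∈ Finset.Icc (0:ℤ) (n:ℤ), Wf RatFunc.X n r j • h.mono r j)
                  * h.chebZ ((n:ℤ) - r) := (Finset.sum_mul _ _ _).symm
            _ = (∑ j ∈ Finset.Icc (0:ℤ) r, Wf RatFunc.X n r j • h.mono r j)
                  * h.chebZ ((n:ℤ) - r) := by
                congr 1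
                apply sum_Icc_vanish
                intro j hne
                have hW : Wf RatFunc.X n r j ≠ 0 := fun h0 => hne (by simp [h0])
                obtain ⟨h1, h2, h3⟩ := Wf_ne_zero hW
                exact ⟨⟨h1, by omega⟩, ⟨h1, h2⟩⟩)
    _ = ∑ r ∈ Finset.range (n+1),
          (∑ j ∈ Finset.Icc (0:ℤ) ((r:ℕ):ℤ), Wf RatFunc.X n (r:ℕ) j • h.mono (r:ℕ) j)
            * h.chebZ ((n:ℤ) - ((r:ℕ):ℤ)) :=
        sum_Icc_to_range
          (fun x => (∑ j ∈ Finset.Icc (0:ℤ) x, Wf RatFunc.X n x j • h.mono x j)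
            * h.chebZ ((n:ℤ) - x)) n
    _ = _ := by
        refine Finset.sum_congr rfl (fun r hr => ?_)
        rw [Finset.mem_range] at hr
        rw [sum_Icc_to_range (fun x => Wf RatFunc.X n (r:ℕ) x • h.mono (r:ℕ) x) r,
          h.chebZ_natsub n r (by omega)]
        refine congrArg₂ _ (Finset.sum_congr rfl (fun j _ => ?_)) rfl
        rw [h.mono_nat r j]

theorem final_E (n : ℕ) : h.E ^ n * h.F ^ n
    = ∑ r ∈ Finset.range (n+1), (∑ j ∈ Finset.range (r+1),
        Wf RatFunc.X n r j • (h.Km ^ (r - j) * h.Kp ^ j)) * cheb h.C (h.Kp * h.Km) (n - r) := by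
  have hsw := h.swap.final_F n
  rw [show h.swap.F = h.E from rfl, show h.swap.E = h.F from rfl, show h.swap.Km = h.Kp from rfl,
    show h.swap.Kp = h.Km from rfl, show h.swap.C = h.C from rfl] at hsw
  rw [hsw]
  refine Finset.sum_congr rfl (fun r _ => ?_)
  refine congrArg₂ _ (Finset.sum_congr rfl (fun j _ => ?_)) (by rw [← h.hKK])
  exact congrArg (fun z => Wf RatFunc.X n (r:ℕ) (j:ℕ) • z)
    (((show Commute h.Kp h.Km from h.hKK).pow_pow j (r - j)).eq)

end UqRel

/-- for every `n ≥ 0` there is a family of Laurent polynomials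
`c^{(n)}_{r,j} ∈ ℤ[q,q⁻¹]` (`0 ≤ j ≤ r ≤ n`) with non-negative coefficients (here presented
as `q^{-t}·p(q)` with `p` a polynomial with `ℕ`-coefficients), such that `c^{(n)}_{0,0} = 1`,
the bar-symmetry `c^{(n)}_{r,j}(q⁻¹) = c^{(n)}_{r,r-j}(q)` holds, and the stated expansions of
`F^n E^n` and `E^n F^n` hold in every `ℚ(q)`-algebra satisfying the `U_q(s̃l₂)` relations. -/
theorem statement11.{u} (n : ℕ) :
    ∃ (p : ℕ → ℕ → Polynomial ℕ) (t : ℕ → ℕ → ℕ),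
      lvalAt (p 0 0) (t 0 0) RatFunc.X = 1 ∧
      (∀ r j : ℕ, j ≤ r → r ≤ n →
        lvalAt (p r j) (t r j) (RatFunc.X)⁻¹ = lvalAt (p r (r - j)) (t r (r - j)) RatFunc.X) ∧
      (∀ (A : Type u) [Ring A] [Algebra (RatFunc ℚ) A], ∀ (q : RatFunc ℚ), q = RatFunc.X →
        ∀ E F Kp Km : A,
        Kp * Km = Km * Kp →
        Kp * E = (q ^ 2) • (E * Kp) →
        Km * E = (q⁻¹ ^ 2) • (E * Km) →
        Kp * F = (q⁻¹ ^ 2) • (F * Kp) →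
        Km * F = (q ^ 2) • (F * Km) →
        E * F - F * E = (q⁻¹ - q) • (Kp - Km) →
        ∀ C : A, C = F * E - q • Kp - q⁻¹ • Km →
          F ^ n * E ^ n = ∑ r ∈ Finset.range (n + 1),
              (∑ j ∈ Finset.range (r + 1),
                lvalAt (p r j) (t r j) q • (Km ^ j * Kp ^ (r - j))) * cheb C (Kp * Km) (n - r) ∧
          E ^ n * F ^ n = ∑ r ∈ Finset.range (n + 1),
              (∑ j ∈ Finset.range (r + 1),
                lvalAt (p r j) (t r j) q • (Km ^ (r - j) * Kp ^ j)) * cheb C (Kp * Km) (n - r)) := by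
  refine ⟨fun r j => Pc n (r:ℤ) (j:ℤ), fun _ _ => n^2, ?_, ?_, ?_⟩
  · have := Wf_diag RatFunc.X RatFunc.X_ne_zero n
    simpa [Wf] using this
  · intro r j hjr hrn
    have := Wf_bar n (r:ℤ) (j:ℤ)
    rw [show ((r:ℤ) - (j:ℤ)) = ((r - j : ℕ) : ℤ) by omega] at this
    exact this
  · intro A _ _ q hq E F Kp Km hKK hKpE hKmE hKpF hKmF hEF C hC
    subst hq
    let h : UqRel A := ⟨RatFunc.X, E, F, Kp, Km, rfl, hKK, hKpE, hKmE, hKpF, hKmF, hEF, C, hC⟩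
    exact ⟨h.final_F n, h.final_E n⟩

end
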